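/- Let y ≤ x and 0 ≤ s ≤ t, and let p_r denote the Gaussian heat kernel. Then ∫₀ˢ ∫_ℝ (P_{t−s+r} 1_{[y,x]}(z) − P_r 1_{[y,x]}(z))² dz dr = (1/2π) ∫_ℝ [(1 − e^{−s z²})/z²] (1 − e^{−(t−s) z²/2})² |1̂_{[y,x]}(z)|² dz. -/

import Mathlib

open MeasureTheory Real Filter

noncomputable def heatKernel (t x : ℝ) : ℝ :=
  (1 / Real.sqrt (2 * Real.pi * t)) * Real.exp (-x ^ 2 / (2 * t))

noncomputable def heatP (t : ℝ) (f : ℝ → ℝ) (x : ℝ) : ℝ :=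
  if t = 0 then f x else ∫ y : ℝ, heatKernel t (x - y) * f y

noncomputable def scaled (N : ℝ) (f : ℝ → ℝ) (x : ℝ) : ℝ :=
  (1 / Real.sqrt N) * f (x / N)

noncomputable def ft (f : ℝ → ℝ) (z : ℝ) : ℂ :=
  ∫ y : ℝ, (f y : ℂ) * Complex.exp (Complex.I * z * y)

/-!
The heat flows `P_c μ z = ∫ p_c (z - u) dμ(u)` of a finite measure `μ` (here Lebesgue measure
on `[y, x]`) satisfy a Plancherel identity that can be checked by hand: by Chapman–Kolmogorov,
`∫ p_a (z - u) p_b (z - v) dz = p_{a+b} (u - v)`, and `2π p_c` is the Fourier transform of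
`e^{-c z²/2}`, so both `∫ P_a μ · P_b μ` and `(2π)⁻¹ ∫ e^{-(a+b) z²/2} |μ̂ z|²` equal
`∫∫ p_{a+b} (u - v) dμ(u) dμ(v)`. Expanding squares gives the identity for `(P_a μ - P_b μ)²`;
integrating in time and exchanging the integrals (Tonelli) leaves the elementary integral
`∫₀ˢ (e^{-(t-s+r) z²/2} - e^{-r z²/2})² dr`.
-/

open ProbabilityTheory

section SubSq

variable {α : Type*} [MeasurableSpace α] {ν : Measure α} {f g : α → ℝ}

lemma integrable_sub_sq (hff : Integrable (fun x ↦ f x * f x) ν)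
    (hfg : Integrable (fun x ↦ f x * g x) ν) (hgg : Integrable (fun x ↦ g x * g x) ν) :
    Integrable (fun x ↦ (f x - g x) ^ 2) ν := by
  have h (x : α) : (f x - g x) ^ 2 = f x * f x - 2 * (f x * g x) + g x * g x := by ring
  simp_rw [h]
  exact (hff.sub (hfg.const_mul 2)).add hgg

lemma integral_sub_sq (hff : Integrable (fun x ↦ f x * f x) ν)
    (hfg : Integrable (fun x ↦ f x * g x) ν) (hgg : Integrable (fun x ↦ g x * g x) ν) :
    ∫ x, (f x - g x) ^ 2 ∂ν = ∫ x, f x * f x ∂ν - 2 * ∫ x, f x * g x ∂ν + ∫ x, g x * g x ∂ν := by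
  have h2fg : Integrable (fun x ↦ 2 * (f x * g x)) ν := hfg.const_mul 2
  have hsub : Integrable (fun x ↦ f x * f x - 2 * (f x * g x)) ν := hff.sub h2fg
  have h (x : α) : (f x - g x) ^ 2 = f x * f x - 2 * (f x * g x) + g x * g x := by ring
  simp_rw [h]
  rw [integral_add hsub hgg, integral_sub hff h2fg, integral_const_mul]

end SubSq

section Swap

variable {α β : Type*} [MeasurableSpace α] [MeasurableSpace β] {μ : Measure α} {ν : Measure β}
  [SFinite ν] {f : α → β → ℝ}

lemma integral_integral_eq_toReal_lintegral_lintegral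
    (hf : Measurable (Function.uncurry f)) (hf0 : ∀ a b, 0 ≤ f a b)
    (hfi : ∀ᵐ a ∂μ, Integrable (f a) ν) :
    ∫ a, ∫ b, f a b ∂ν ∂μ = (∫⁻ a, ∫⁻ b, ENNReal.ofReal (f a b) ∂ν ∂μ).toReal := by
  rw [integral_eq_lintegral_of_nonneg_ae (ae_of_all _ fun a ↦ integral_nonneg (hf0 a))
    hf.stronglyMeasurable.integral_prod_right'.aestronglyMeasurable]
  congr 1
  refine lintegral_congr_ae ?_
  filter_upwards [hfi] with a ha
  exact ofReal_integral_eq_lintegral_ofReal ha (ae_of_all _ (hf0 a))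

lemma integral_integral_swap_of_nonneg [SFinite μ]
    (hf : Measurable (Function.uncurry f)) (hf0 : ∀ a b, 0 ≤ f a b)
    (hμ : ∀ᵐ a ∂μ, Integrable (f a) ν) (hν : ∀ᵐ b ∂ν, Integrable (fun a ↦ f a b) μ) :
    ∫ a, ∫ b, f a b ∂ν ∂μ = ∫ b, ∫ a, f a b ∂μ ∂ν := by
  rw [integral_integral_eq_toReal_lintegral_lintegral hf hf0 hμ,
    integral_integral_eq_toReal_lintegral_lintegral (f := fun b a ↦ f a b)
      (hf.comp measurable_swap) (fun b a ↦ hf0 a b) hν,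
    lintegral_lintegral_swap (f := fun a b ↦ ENNReal.ofReal (f a b))
      (ENNReal.measurable_ofReal.comp hf).aemeasurable]

end Swap

lemma heatKernel_nonneg (c w : ℝ) : 0 ≤ heatKernel c w := by
  unfold heatKernel; positivity

lemma heatKernel_le {c : ℝ} (hc : 0 ≤ c) (w : ℝ) : heatKernel c w ≤ 1 / √(2 * π * c) := by
  refine mul_le_of_le_one_right (by positivity) (Real.exp_le_one_iff.mpr ?_)
  rw [neg_div]
  exact neg_nonpos.mpr (by positivity)

@[fun_prop]
lemma continuous_heatKernel (c : ℝ) : Continuous (heatKernel c) := by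
  unfold heatKernel; fun_prop

lemma heatKernel_eq_gaussianPDFReal {c : ℝ} (hc : 0 ≤ c) :
    heatKernel c = gaussianPDFReal 0 c.toNNReal := by
  ext w
  simp [heatKernel, gaussianPDFReal, Real.coe_toNNReal _ hc]

lemma integrable_heatKernel {c : ℝ} (hc : 0 ≤ c) : Integrable (heatKernel c) := by
  rw [heatKernel_eq_gaussianPDFReal hc]
  exact integrable_gaussianPDFReal 0 _

lemma integral_heatKernel {c : ℝ} (hc : 0 < c) : ∫ w, heatKernel c w = 1 := by
  rw [heatKernel_eq_gaussianPDFReal hc.le]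
  exact integral_gaussianPDFReal_eq_one 0 (by simpa using hc)

lemma heatKernel_mul_heatKernel {a b : ℝ} (ha : 0 < a) (hb : 0 < b) (u v z : ℝ) :
    heatKernel a (z - u) * heatKernel b (z - v)
      = heatKernel (a + b) (u - v) *
          heatKernel (a * b / (a + b)) (z - (b * u + a * v) / (a + b)) := by
  have hab : 0 < a + b := by positivity
  have hsqrt : √(2 * π * a) * √(2 * π * b)
      = √(2 * π * (a + b)) * √(2 * π * (a * b / (a + b))) := by
    rw [← Real.sqrt_mul (by positivity), ← Real.sqrt_mul (by positivity)]
    congr 1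
    field_simp
  have hexp : -(z - u) ^ 2 / (2 * a) + -(z - v) ^ 2 / (2 * b)
      = -(u - v) ^ 2 / (2 * (a + b))
        + -(z - (b * u + a * v) / (a + b)) ^ 2 / (2 * (a * b / (a + b))) := by
    field_simp
    ring
  simp only [heatKernel]
  rw [mul_mul_mul_comm, ← Real.exp_add, one_div_mul_one_div, hsqrt, hexp, Real.exp_add,
    ← one_div_mul_one_div]
  ring

lemma integral_heatKernel_mul_heatKernel {a b : ℝ} (ha : 0 < a) (hb : 0 < b) (u v : ℝ) :
    ∫ z, heatKernel a (z - u) * heatKernel b (z - v) = heatKernel (a + b) (u - v) := by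
  simp_rw [heatKernel_mul_heatKernel ha hb, integral_const_mul,
    integral_sub_right_eq_self (heatKernel _),
    integral_heatKernel (by positivity : 0 < a * b / (a + b)), mul_one]

lemma integrable_heatKernel_mul_heatKernel {a b : ℝ} (ha : 0 < a) (hb : 0 < b) (u v : ℝ) :
    Integrable fun z ↦ heatKernel a (z - u) * heatKernel b (z - v) := by
  simp_rw [heatKernel_mul_heatKernel ha hb]
  exact ((integrable_heatKernel (by positivity)).comp_sub_right _).const_mul _

lemma integral_exp_mul_cos {c : ℝ} (hc : 0 < c) (w : ℝ) :
    ∫ z, exp (-c * z ^ 2 / 2) * cos (z * w) = 2 * π * heatKernel c w := by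
  have hb : (-(c / 2 : ℂ)).re < 0 := by simpa using hc
  have hre (z : ℝ) : exp (-c * z ^ 2 / 2) * cos (z * w)
      = (Complex.exp (-(c / 2 : ℂ) * z ^ 2 + w * Complex.I * z + 0)).re := by
    rw [show -(c / 2 : ℂ) * z ^ 2 + w * Complex.I * z + 0
        = (-c * z ^ 2 / 2 : ℝ) + (z * w : ℝ) * Complex.I by push_cast; ring,
      Complex.exp_add, ← Complex.ofReal_exp, Complex.re_ofReal_mul, Complex.exp_ofReal_mul_I_re]
  have hsqrt : (π / -(-(c / 2 : ℂ))) ^ (1 / 2 : ℂ) = ((2 * π / √(2 * π * c) : ℝ) : ℂ) := by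
    have h : 2 * π / √(2 * π * c) = √(π / (c / 2)) := by
      rw [eq_comm, Real.sqrt_eq_iff_mul_self_eq (by positivity) (by positivity)]
      field_simp
      rw [Real.sq_sqrt (by positivity)]
    rw [h, neg_neg, Real.sqrt_eq_rpow, Complex.ofReal_cpow (by positivity)]
    norm_num
  have hexp : 0 - (w * Complex.I) ^ 2 / (4 * -(c / 2 : ℂ)) = ((-w ^ 2 / (2 * c) : ℝ) : ℂ) := by
    have : (c : ℂ) ≠ 0 := by exact_mod_cast hc.ne'
    push_cast
    field_simp
    rw [Complex.I_sq]
    ring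
  simp_rw [hre, ← RCLike.re_to_complex]
  rw [integral_re (integrable_cexp_quadratic' hb _ _), integral_cexp_quadratic hb, hsqrt, hexp,
    ← Complex.ofReal_exp, ← Complex.ofReal_mul, RCLike.re_to_complex, Complex.ofReal_re, heatKernel]
  ring

lemma integral_sq_exp_sub_exp (d s z : ℝ) :
    ∫ r in (0 : ℝ)..s, (exp (-(d + r) * z ^ 2 / 2) - exp (-r * z ^ 2 / 2)) ^ 2
      = (1 - exp (-s * z ^ 2)) / z ^ 2 * (1 - exp (-d * z ^ 2 / 2)) ^ 2 := by
  rcases eq_or_ne z 0 with rfl | hz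
  · simp -- both sides vanish, the right one because `x / 0 = 0`
  have hpt (r : ℝ) : (exp (-(d + r) * z ^ 2 / 2) - exp (-r * z ^ 2 / 2)) ^ 2
      = (1 - exp (-d * z ^ 2 / 2)) ^ 2 * exp (r * -z ^ 2) := by
    rw [show -(d + r) * z ^ 2 / 2 = -d * z ^ 2 / 2 + -r * z ^ 2 / 2 by ring, exp_add,
      show r * -z ^ 2 = -r * z ^ 2 / 2 + -r * z ^ 2 / 2 by ring, exp_add]
    ring
  simp_rw [hpt]
  rw [intervalIntegral.integral_const_mul,
    intervalIntegral.integral_comp_mul_right exp (neg_ne_zero.mpr (pow_ne_zero 2 hz)),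
    integral_exp, zero_mul, exp_zero, smul_eq_mul]
  field_simp
  ring_nf

/-- `P_c μ`, the density of `μ ∗ gaussianReal 0 c`. -/
noncomputable def heatFlow (μ : Measure ℝ) (c z : ℝ) : ℝ := ∫ u, heatKernel c (z - u) ∂μ

noncomputable def heatEnergy (μ : Measure ℝ) (c : ℝ) : ℝ :=
  ∫ p, heatKernel c (p.1 - p.2) ∂(μ.prod μ)

/-- `|(P_c μ)^ z|`: the Fourier transform of `P_c μ` is `e^{-c z²/2}` times that of `μ`, which
`charFun` computes with the sign convention of `ft`. -/
noncomputable def fourierNormHeatFlow (μ : Measure ℝ) (c z : ℝ) : ℝ :=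
  exp (-c * z ^ 2 / 2) * ‖charFun μ z‖

lemma fourierNormHeatFlow_mul_fourierNormHeatFlow (μ : Measure ℝ) (a b z : ℝ) :
    fourierNormHeatFlow μ a z * fourierNormHeatFlow μ b z
      = exp (-(a + b) * z ^ 2 / 2) * ‖charFun μ z‖ ^ 2 := by
  rw [fourierNormHeatFlow, fourierNormHeatFlow,
    show -(a + b) * z ^ 2 / 2 = -a * z ^ 2 / 2 + -b * z ^ 2 / 2 by ring, exp_add]
  ring

section FiniteMeasure

variable {μ : Measure ℝ} [IsFiniteMeasure μ]

lemma integrable_heatKernel_mul_heatKernel_prod {a b : ℝ} (ha : 0 < a) (hb : 0 < b) :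
    Integrable (fun q : ℝ × ℝ × ℝ ↦ heatKernel a (q.1 - q.2.1) * heatKernel b (q.1 - q.2.2))
      (volume.prod (μ.prod μ)) := by
  rw [integrable_prod_iff' (by fun_prop)]
  refine ⟨ae_of_all _ fun p ↦ integrable_heatKernel_mul_heatKernel ha hb p.1 p.2, ?_⟩
  simp_rw [Real.norm_of_nonneg (mul_nonneg (heatKernel_nonneg _ _) (heatKernel_nonneg _ _)),
    integral_heatKernel_mul_heatKernel ha hb]
  refine .of_bound (by fun_prop) (1 / √(2 * π * (a + b))) (ae_of_all _ fun p ↦ ?_)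
  rw [Real.norm_of_nonneg (heatKernel_nonneg _ _)]
  exact heatKernel_le (by positivity) _

lemma heatFlow_mul_heatFlow (a b z : ℝ) :
    heatFlow μ a z * heatFlow μ b z
      = ∫ p, heatKernel a (z - p.1) * heatKernel b (z - p.2) ∂(μ.prod μ) :=
  (integral_prod_mul (fun u ↦ heatKernel a (z - u)) (fun v ↦ heatKernel b (z - v))).symm

lemma integrable_heatFlow_mul_heatFlow {a b : ℝ} (ha : 0 < a) (hb : 0 < b) :
    Integrable fun z ↦ heatFlow μ a z * heatFlow μ b z := by
  simp_rw [heatFlow_mul_heatFlow]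
  exact (integrable_heatKernel_mul_heatKernel_prod ha hb).integral_prod_left

lemma integral_heatFlow_mul_heatFlow {a b : ℝ} (ha : 0 < a) (hb : 0 < b) :
    ∫ z, heatFlow μ a z * heatFlow μ b z = heatEnergy μ (a + b) := by
  simp_rw [heatFlow_mul_heatFlow]
  rw [integral_integral_swap (integrable_heatKernel_mul_heatKernel_prod ha hb)]
  simp_rw [integral_heatKernel_mul_heatKernel ha hb]
  rfl

lemma sq_norm_charFun (z : ℝ) :
    ‖charFun μ z‖ ^ 2 = ∫ p, cos (z * (p.1 - p.2)) ∂(μ.prod μ) := by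
  have hconj : ‖charFun μ z‖ ^ 2 = (charFun μ z * charFun μ (-z)).re := by
    rw [charFun_neg, Complex.mul_conj', ← Complex.ofReal_pow, Complex.ofReal_re]
  have hexp (p : ℝ × ℝ) :
      Complex.exp (z * p.1 * Complex.I) * Complex.exp ((-z : ℝ) * p.2 * Complex.I)
        = Complex.exp ((z * (p.1 - p.2) : ℝ) * Complex.I) := by
    rw [← Complex.exp_add]
    push_cast
    ring_nf
  rw [hconj, charFun_apply_real, charFun_apply_real, ← integral_prod_mul]
  simp_rw [hexp, ← RCLike.re_to_complex]
  rw [← integral_re]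
  · simp_rw [RCLike.re_to_complex, Complex.exp_ofReal_mul_I_re]
  · refine .of_bound (by fun_prop) 1 (ae_of_all _ fun p ↦ ?_)
    rw [Complex.norm_exp_ofReal_mul_I]

lemma integrable_exp_mul_cos_prod {c : ℝ} (hc : 0 < c) :
    Integrable (fun q : ℝ × ℝ × ℝ ↦ exp (-c * q.1 ^ 2 / 2) * cos (q.1 * (q.2.1 - q.2.2)))
      (volume.prod (μ.prod μ)) := by
  have hc2 : 0 < c / 2 := by positivity
  refine ((integrable_exp_neg_mul_sq hc2).mul_prod (integrable_const (1 : ℝ))).mono'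
    (by fun_prop) (ae_of_all _ fun q ↦ ?_)
  rw [norm_mul, Real.norm_of_nonneg (exp_pos _).le, mul_one,
    show -c * q.1 ^ 2 / 2 = -(c / 2) * q.1 ^ 2 by ring]
  exact mul_le_of_le_one_right (exp_pos _).le (abs_cos_le_one _)

lemma exp_mul_sq_norm_charFun (c z : ℝ) :
    exp (-c * z ^ 2 / 2) * ‖charFun μ z‖ ^ 2
      = ∫ p, exp (-c * z ^ 2 / 2) * cos (z * (p.1 - p.2)) ∂(μ.prod μ) := by
  rw [sq_norm_charFun, integral_const_mul]

lemma integrable_exp_mul_sq_norm_charFun {c : ℝ} (hc : 0 < c) :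
    Integrable fun z ↦ exp (-c * z ^ 2 / 2) * ‖charFun μ z‖ ^ 2 := by
  simp_rw [exp_mul_sq_norm_charFun]
  exact (integrable_exp_mul_cos_prod hc).integral_prod_left

lemma integral_exp_mul_sq_norm_charFun {c : ℝ} (hc : 0 < c) :
    ∫ z, exp (-c * z ^ 2 / 2) * ‖charFun μ z‖ ^ 2 = 2 * π * heatEnergy μ c := by
  simp_rw [exp_mul_sq_norm_charFun]
  rw [integral_integral_swap (integrable_exp_mul_cos_prod hc)]
  simp_rw [integral_exp_mul_cos hc]
  exact integral_const_mul _ _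

lemma integrable_fourierNormHeatFlow_mul {a b : ℝ} (ha : 0 < a) (hb : 0 < b) :
    Integrable fun z ↦ fourierNormHeatFlow μ a z * fourierNormHeatFlow μ b z := by
  simp_rw [fourierNormHeatFlow_mul_fourierNormHeatFlow]
  exact integrable_exp_mul_sq_norm_charFun (by positivity)

lemma integral_fourierNormHeatFlow_mul {a b : ℝ} (ha : 0 < a) (hb : 0 < b) :
    ∫ z, fourierNormHeatFlow μ a z * fourierNormHeatFlow μ b z = 2 * π * heatEnergy μ (a + b) := by
  simp_rw [fourierNormHeatFlow_mul_fourierNormHeatFlow]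
  exact integral_exp_mul_sq_norm_charFun (by positivity)

lemma integrable_sq_fourierNormHeatFlow_sub {a b : ℝ} (ha : 0 < a) (hb : 0 < b) :
    Integrable fun z ↦ (fourierNormHeatFlow μ a z - fourierNormHeatFlow μ b z) ^ 2 :=
  integrable_sub_sq (integrable_fourierNormHeatFlow_mul ha ha)
    (integrable_fourierNormHeatFlow_mul ha hb) (integrable_fourierNormHeatFlow_mul hb hb)

lemma integral_sq_heatFlow_sub {a b : ℝ} (ha : 0 < a) (hb : 0 < b) :
    ∫ z, (heatFlow μ a z - heatFlow μ b z) ^ 2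
      = 1 / (2 * π) * ∫ z, (fourierNormHeatFlow μ a z - fourierNormHeatFlow μ b z) ^ 2 := by
  rw [integral_sub_sq (integrable_heatFlow_mul_heatFlow ha ha)
      (integrable_heatFlow_mul_heatFlow ha hb) (integrable_heatFlow_mul_heatFlow hb hb),
    integral_sub_sq (integrable_fourierNormHeatFlow_mul ha ha)
      (integrable_fourierNormHeatFlow_mul ha hb) (integrable_fourierNormHeatFlow_mul hb hb),
    integral_heatFlow_mul_heatFlow ha ha, integral_heatFlow_mul_heatFlow ha hb,
    integral_heatFlow_mul_heatFlow hb hb, integral_fourierNormHeatFlow_mul ha ha,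
    integral_fourierNormHeatFlow_mul ha hb, integral_fourierNormHeatFlow_mul hb hb]
  field_simp

end FiniteMeasure

lemma heatP_indicator_one {s : Set ℝ} (hs : MeasurableSet s) {c : ℝ} (hc : c ≠ 0) :
    heatP c (s.indicator 1) = heatFlow (volume.restrict s) c := by
  ext z
  rw [heatP, if_neg hc, heatFlow, ← integral_indicator hs]
  congr 1 with u
  by_cases hu : u ∈ s <;> simp [hu]

lemma ft_indicator_one {s : Set ℝ} (hs : MeasurableSet s) :
    ft (s.indicator 1) = charFun (volume.restrict s) := by
  ext z
  rw [ft, charFun_apply_real, ← integral_indicator hs]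
  congr 1 with u
  by_cases hu : u ∈ s
  · simp only [Set.indicator_of_mem hu, Pi.one_apply, Complex.ofReal_one, one_mul]
    ring_nf
  · simp [hu]

theorem stmt6_general (y x s t : ℝ) (hs : 0 ≤ s) (hst : s ≤ t) :
    (∫ r in (0:ℝ)..s, ∫ z : ℝ,
        (heatP (t - s + r) (Set.indicator (Set.Icc y x) 1) z
          - heatP r (Set.indicator (Set.Icc y x) 1) z) ^ 2)
      = (1 / (2 * Real.pi)) *
        ∫ z : ℝ, ((1 - Real.exp (-s * z ^ 2)) / z ^ 2) *
          (1 - Real.exp (-(t - s) * z ^ 2 / 2)) ^ 2 *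
          (‖ft (Set.indicator (Set.Icc y x) 1) z‖) ^ 2 := by
  set μ := volume.restrict (Set.Icc y x)
  set W : ℝ → ℝ → ℝ := fun r z ↦
    (fourierNormHeatFlow μ (t - s + r) z - fourierNormHeatFlow μ r z) ^ 2
  have hW (r z : ℝ) : W r z
      = (exp (-(t - s + r) * z ^ 2 / 2) - exp (-r * z ^ 2 / 2)) ^ 2 * ‖charFun μ z‖ ^ 2 := by
    simp only [W, fourierNormHeatFlow]; ring
  have hpos {r : ℝ} (hr : r ∈ Set.Ioc 0 s) : 0 < t - s + r := by linarith [hr.1]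
  rw [intervalIntegral.integral_of_le hs, ft_indicator_one measurableSet_Icc]
  calc _ = ∫ r in Set.Ioc 0 s, 1 / (2 * π) * ∫ z, W r z := by
        refine setIntegral_congr_fun measurableSet_Ioc fun r hr ↦ ?_
        rw [heatP_indicator_one measurableSet_Icc (hpos hr).ne',
          heatP_indicator_one measurableSet_Icc hr.1.ne', integral_sq_heatFlow_sub (hpos hr) hr.1]
    _ = 1 / (2 * π) * ∫ z, ∫ r in Set.Ioc 0 s, W r z := by
        rw [integral_const_mul, integral_integral_swap_of_nonneg
          (by unfold fourierNormHeatFlow; fun_prop) (fun _ _ ↦ sq_nonneg _)]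
        · exact (ae_restrict_mem measurableSet_Ioc).mono fun r hr ↦
            integrable_sq_fourierNormHeatFlow_sub (hpos hr) hr.1
        · exact ae_of_all _ fun z ↦
            Continuous.integrableOn_Ioc (by unfold fourierNormHeatFlow; fun_prop)
    _ = _ := by
        congr 1
        refine integral_congr_ae (ae_of_all _ fun z ↦ ?_)
        simp_rw [hW]
        rw [integral_mul_const, ← intervalIntegral.integral_of_le hs, integral_sq_exp_sub_exp]

theorem stmt6 (y x s t : ℝ) (hyx : y ≤ x) (hs : 0 ≤ s) (hst : s ≤ t) :
    (∫ r in (0:ℝ)..s, ∫ z : ℝ,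
        (heatP (t - s + r) (Set.indicator (Set.Icc y x) 1) z
          - heatP r (Set.indicator (Set.Icc y x) 1) z) ^ 2)
      = (1 / (2 * Real.pi)) *
        ∫ z : ℝ, ((1 - Real.exp (-s * z ^ 2)) / z ^ 2) *
          (1 - Real.exp (-(t - s) * z ^ 2 / 2)) ^ 2 *
          (‖ft (Set.indicator (Set.Icc y x) 1) z‖) ^ 2 :=
  stmt6_general y x s t hs hst
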